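/- Let m ≥ 1 and m ≥ t ≥ s ≥ 0 be integers with m ≥ t + s, and set λ = (m, t, s, 0) and μ = (m, m−s, m−t, 0). Then the Littlewood–Richardson coefficient c^{(m+1,m+1,m−1,m−1)}_{λ,μ} equals: 0 if t = s = 0; 2 if t > s > 0; and 1 otherwise (i.e. if t > s = 0 or if t = s > 0). -/

import Mathlib

/-- A length-4 partition `(a, b, c, d)` as a row-length function: row `i`
(for `0 ≤ i ≤ 3`) has length the `i`-th entry, and all other rows are empty. -/
def part4 (a b c d : ℕ) : ℕ → ℕ
  | 0 => a
  | 1 => b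
  | 2 => c
  | 3 => d
  | _ => 0

/-- The content function of the length-4 partition `(a, b, c, d)`: the entry
`1` must occur `a` times, the entry `2` must occur `b` times, the entry `3`
must occur `c` times, the entry `4` must occur `d` times, and every other
entry must not occur. -/
def content4 (a b c d : ℕ) : ℕ → ℕ
  | 1 => a
  | 2 => b
  | 3 => c
  | 4 => d
  | _ => 0

/-- The cell `(i, j)` (row `i`, column `j`) lies in the skew diagram `ν / λ`,
i.e. it is a cell of `ν` but not of `λ`. -/
def IsSkewCell (ν lam : ℕ → ℕ) (i j : ℕ) : Prop :=
  lam i ≤ j ∧ j < ν i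

instance (ν lam : ℕ → ℕ) (i j : ℕ) : Decidable (IsSkewCell ν lam i j) :=
  inferInstanceAs (Decidable (_ ∧ _))

/-- A bound on the column indices of cells of `ν` (for `ν` a length-4
partition all of whose rows have length at most this number). -/
def colBound (ν : ℕ → ℕ) : ℕ := ν 0 + ν 1 + ν 2 + ν 3

/-- The number of cells of the skew diagram `ν / λ` carrying entry `e` in the
filling `T` and lying in the prefix of the reverse reading word determined by
`(r, c)`: the cells in rows before row `r`, together with the cells of row `r`
in columns `≥ c` (rows are read from top to bottom, each row from right to
left, so these sets are exactly the prefixes of the reverse reading word). -/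
def prefixCount (ν lam : ℕ → ℕ) (T : ℕ → ℕ → ℕ) (r c e : ℕ) : ℕ :=
  ((Finset.range 4 ×ˢ Finset.range (colBound ν)).filter
    (fun p => IsSkewCell ν lam p.1 p.2 ∧ T p.1 p.2 = e ∧
      (p.1 < r ∨ (p.1 = r ∧ c ≤ p.2)))).card

/-- The total number of cells of the skew diagram `ν / λ` carrying entry `e`
in the filling `T`. -/
def entryCount (ν lam : ℕ → ℕ) (T : ℕ → ℕ → ℕ) (e : ℕ) : ℕ :=
  ((Finset.range 4 ×ˢ Finset.range (colBound ν)).filter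
    (fun p => IsSkewCell ν lam p.1 p.2 ∧ T p.1 p.2 = e)).card

/-- `T` is a Littlewood–Richardson tableau of shape `ν / λ` and content `μ`
(where `μ` is given as a content function, e.g. `content4 a b c d`):
a filling of the cells of `ν` not in `λ` by positive integers, weakly
increasing along each row, strictly increasing down each column, in which each
entry `e ≥ 1` occurs exactly `μ e` times and every prefix of the reverse
reading word contains at least as many `e`'s as `(e+1)`'s for every `e ≥ 1`.
The filling is normalised to be `0` outside the skew diagram. -/
structure IsLRTableau (ν lam μ : ℕ → ℕ) (T : ℕ → ℕ → ℕ) : Prop where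
  zero_off : ∀ i j, ¬ IsSkewCell ν lam i j → T i j = 0
  pos : ∀ i j, IsSkewCell ν lam i j → 1 ≤ T i j
  row_weak : ∀ i j j', IsSkewCell ν lam i j → IsSkewCell ν lam i j' → j ≤ j' →
    T i j ≤ T i j'
  col_strict : ∀ i i' j, IsSkewCell ν lam i j → IsSkewCell ν lam i' j → i < i' →
    T i j < T i' j
  content : ∀ e, 1 ≤ e → entryCount ν lam T e = μ e
  lattice : ∀ r c e, 1 ≤ e → prefixCount ν lam T r c (e + 1) ≤ prefixCount ν lam T r c e

/-- The Littlewood–Richardson coefficient `c^ν_{λ, μ}`: the number of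
Littlewood–Richardson tableaux of shape `ν / λ` and content `μ`. -/
noncomputable def lrCoeff (ν lam μ : ℕ → ℕ) : ℕ :=
  Nat.card {T : ℕ → ℕ → ℕ // IsLRTableau ν lam μ T}

open Finset

lemma prod_filter_card (n B : ℕ) (P : ℕ × ℕ → Prop) [DecidablePred P] :
    ((Finset.range n ×ˢ Finset.range B).filter P).card
      = ∑ i ∈ Finset.range n, ((Finset.range B).filter fun j => P (i, j)).card := by
  have h : (Finset.range n ×ˢ Finset.range B).filter P
      = (Finset.range n).biUnion
          (fun i => ((Finset.range B).filter fun j => P (i, j)).image fun j => (i, j)) := by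
    ext ⟨i, j⟩
    simp only [mem_filter, mem_product, mem_range, mem_biUnion, mem_image, Prod.mk.injEq]
    constructor
    · rintro ⟨⟨hi, hj⟩, hP⟩; exact ⟨i, hi, j, ⟨hj, hP⟩, rfl, rfl⟩
    · rintro ⟨a, ha, b, ⟨hb, hP⟩, rfl, rfl⟩; exact ⟨⟨ha, hb⟩, hP⟩
  rw [h, Finset.card_biUnion]
  · exact Finset.sum_congr rfl fun i _ =>
      Finset.card_image_of_injective _ (fun a b hab => (Prod.mk.injEq _ _ _ _ ▸ hab).2)
  · intro x hx y hy hxy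
    simp only [Finset.disjoint_left, mem_image, mem_filter]
    rintro ⟨a, b⟩ ⟨c, hc, he⟩ ⟨d, hd, he2⟩
    exact hxy (congrArg Prod.fst (he.trans he2.symm))

lemma rowCard (B lo hi : ℕ) (h : hi ≤ B) (P : ℕ → Prop) [DecidablePred P]
    (hP : ∀ j < B, (P j ↔ lo ≤ j ∧ j < hi)) :
    ((Finset.range B).filter P).card = hi - lo := by
  have : (Finset.range B).filter P = Finset.Ico lo hi := by
    ext j
    simp only [Finset.mem_filter, Finset.mem_range, Finset.mem_Ico]
    constructor
    · rintro ⟨hj, hPj⟩; exact (hP j hj).1 hPj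
    · rintro ⟨h1, h2⟩; exact ⟨lt_of_lt_of_le h2 h, (hP j (lt_of_lt_of_le h2 h)).2 ⟨h1, h2⟩⟩
  rw [this, Nat.card_Ico]

/-- The candidate tableau family. -/
def TabF (m t s u v w : ℕ) : ℕ → ℕ → ℕ
  | 0, j => if j = m then 1 else 0
  | 1, j => if j = m then 2 else if t ≤ j ∧ j < m then 1 else 0
  | 2, j => if s ≤ j ∧ j + 1 < m then (if j < w then 1 else 2) else 0
  | 3, j => if j + 1 < m then (if j < u then 1 else if j < v then 2 else 3) else 0
  | _+4, _ => 0


set_option linter.unusedSectionVars false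

lemma hB4 (m : ℕ) : m + 1 ≤ colBound (part4 (m+1) (m+1) (m-1) (m-1)) := by
  simp [colBound, part4]; omega

section Counts

variable (m t s u v w : ℕ)

lemma TabF_le3 : ∀ i j, TabF m t s u v w i j ≤ 3 := by
  intro i j
  rcases i with _|_|_|_|i <;> simp only [TabF] <;>
    first | omega | (split_ifs <;> omega)

lemma entryCount_zero (ν lam : ℕ → ℕ) (T : ℕ → ℕ → ℕ) (e : ℕ)
    (h : ∀ i j, T i j ≠ e) : entryCount ν lam T e = 0 := by
  rw [entryCount, Finset.card_eq_zero, Finset.filter_eq_empty_iff]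
  rintro ⟨i, j⟩ _
  exact fun hp => h i j hp.2

lemma pc_le_entry (ν lam : ℕ → ℕ) (T : ℕ → ℕ → ℕ) (r c e : ℕ) :
    prefixCount ν lam T r c e ≤ entryCount ν lam T e :=
  Finset.card_le_card (Finset.monotone_filter_right _ (fun p _ hp => ⟨hp.1, hp.2.1⟩))

lemma pc_of_ge4 (ν lam : ℕ → ℕ) (T : ℕ → ℕ → ℕ) (r c e : ℕ) (hr : 4 ≤ r) :
    prefixCount ν lam T r c e = entryCount ν lam T e := by
  rw [prefixCount, entryCount]
  congr 1
  apply Finset.filter_congr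
  rintro ⟨i, j⟩ hij
  simp only [Finset.mem_product, Finset.mem_range] at hij
  have : i < r := lt_of_lt_of_le hij.1 hr
  constructor
  · rintro ⟨h1, h2, _⟩; exact ⟨h1, h2⟩
  · rintro ⟨h1, h2⟩; exact ⟨h1, h2, Or.inl this⟩

variable (hm : 1 ≤ m) (ht : t ≤ m) (hs : s ≤ w) (hw : w + 1 ≤ m) (hu : u ≤ v) (hv : v + 1 ≤ m)

include hm ht hs hw hu hv

lemma ecF_1 :
    entryCount (part4 (m+1) (m+1) (m-1) (m-1)) (part4 m t s 0) (TabF m t s u v w) 1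
      = 1 + (m - t) + (w - s) + u := by
  rw [entryCount, prod_filter_card]
  rw [show (4:ℕ) = 3+1 from rfl, Finset.sum_range_succ, Finset.sum_range_succ,
    Finset.sum_range_succ, Finset.sum_range_succ, Finset.sum_range_zero]
  rw [rowCard _ m (m+1) (hB4 m) _ (fun j hj => by
    simp only [IsSkewCell, part4, TabF]; split_ifs <;> omega)]
  rw [rowCard _ t m (by have := hB4 m; omega) _ (fun j hj => by
    simp only [IsSkewCell, part4, TabF]; split_ifs <;> omega)]
  rw [rowCard _ s w (by have := hB4 m; omega) _ (fun j hj => by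
    simp only [IsSkewCell, part4, TabF]; split_ifs <;> omega)]
  rw [rowCard _ 0 u (by have := hB4 m; omega) _ (fun j hj => by
    simp only [IsSkewCell, part4, TabF]; split_ifs <;> omega)]
  omega

lemma ecF_2 :
    entryCount (part4 (m+1) (m+1) (m-1) (m-1)) (part4 m t s 0) (TabF m t s u v w) 2
      = 1 + ((m-1) - w) + (v - u) := by
  rw [entryCount, prod_filter_card]
  rw [show (4:ℕ) = 3+1 from rfl, Finset.sum_range_succ, Finset.sum_range_succ,
    Finset.sum_range_succ, Finset.sum_range_succ, Finset.sum_range_zero]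
  rw [rowCard _ 0 0 (by omega) _ (fun j hj => by
    simp only [IsSkewCell, part4, TabF]; split_ifs <;> omega)]
  rw [rowCard _ m (m+1) (hB4 m) _ (fun j hj => by
    simp only [IsSkewCell, part4, TabF]; split_ifs <;> omega)]
  rw [rowCard _ w (m-1) (by have := hB4 m; omega) _ (fun j hj => by
    simp only [IsSkewCell, part4, TabF]; split_ifs <;> omega)]
  rw [rowCard _ u v (by have := hB4 m; omega) _ (fun j hj => by
    simp only [IsSkewCell, part4, TabF]; split_ifs <;> omega)]
  omega

lemma ecF_3 :
    entryCount (part4 (m+1) (m+1) (m-1) (m-1)) (part4 m t s 0) (TabF m t s u v w) 3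
      = (m-1) - v := by
  rw [entryCount, prod_filter_card]
  rw [show (4:ℕ) = 3+1 from rfl, Finset.sum_range_succ, Finset.sum_range_succ,
    Finset.sum_range_succ, Finset.sum_range_succ, Finset.sum_range_zero]
  rw [rowCard _ 0 0 (by omega) _ (fun j hj => by
    simp only [IsSkewCell, part4, TabF]; split_ifs <;> omega)]
  rw [rowCard _ 0 0 (by omega) _ (fun j hj => by
    simp only [IsSkewCell, part4, TabF]; split_ifs <;> omega)]
  rw [rowCard _ 0 0 (by omega) _ (fun j hj => by
    simp only [IsSkewCell, part4, TabF]; split_ifs <;> omega)]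
  rw [rowCard _ v (m-1) (by have := hB4 m; omega) _ (fun j hj => by
    simp only [IsSkewCell, part4, TabF]; split_ifs <;> omega)]
  omega

end Counts

section PC

set_option linter.unusedSectionVars false
set_option linter.unusedVariables false

variable (m t s u v w c : ℕ) (hm : 1 ≤ m) (ht : t ≤ m) (hs : s ≤ w) (hw : w + 1 ≤ m) (hu : u ≤ v) (hv : v + 1 ≤ m)

include hm ht hs hw hu hv

lemma pcF_0_1 :
    prefixCount (part4 (m+1) (m+1) (m-1) (m-1)) (part4 m t s 0) (TabF m t s u v w) 0 c 1
      = (m+1) - max m c := by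
  rw [prefixCount, prod_filter_card]
  rw [show (4:ℕ) = 3+1 from rfl, Finset.sum_range_succ, Finset.sum_range_succ,
    Finset.sum_range_succ, Finset.sum_range_succ, Finset.sum_range_zero]
  rw [rowCard _ (max m c) (m+1) (by have := hB4 m; omega) _ (fun j hj => by
    simp only [IsSkewCell, part4, TabF]
    first
      | (split_ifs <;> omega)
      | (norm_num; split_ifs <;> omega)
      | (norm_num; omega)
      | norm_num
      | omega)]
  rw [rowCard _ (0) (0) (by have := hB4 m; omega) _ (fun j hj => by
    simp only [IsSkewCell, part4, TabF]
    first
      | (split_ifs <;> omega)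
      | (norm_num; split_ifs <;> omega)
      | (norm_num; omega)
      | norm_num
      | omega)]
  rw [rowCard _ (0) (0) (by have := hB4 m; omega) _ (fun j hj => by
    simp only [IsSkewCell, part4, TabF]
    first
      | (split_ifs <;> omega)
      | (norm_num; split_ifs <;> omega)
      | (norm_num; omega)
      | norm_num
      | omega)]
  rw [rowCard _ (0) (0) (by have := hB4 m; omega) _ (fun j hj => by
    simp only [IsSkewCell, part4, TabF]
    first
      | (split_ifs <;> omega)
      | (norm_num; split_ifs <;> omega)
      | (norm_num; omega)
      | norm_num
      | omega)]
  try omega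

lemma pcF_0_2 :
    prefixCount (part4 (m+1) (m+1) (m-1) (m-1)) (part4 m t s 0) (TabF m t s u v w) 0 c 2
      = 0 := by
  rw [prefixCount, prod_filter_card]
  rw [show (4:ℕ) = 3+1 from rfl, Finset.sum_range_succ, Finset.sum_range_succ,
    Finset.sum_range_succ, Finset.sum_range_succ, Finset.sum_range_zero]
  rw [rowCard _ (0) (0) (by have := hB4 m; omega) _ (fun j hj => by
    simp only [IsSkewCell, part4, TabF]
    first
      | (split_ifs <;> omega)
      | (norm_num; split_ifs <;> omega)
      | (norm_num; omega)
      | norm_num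
      | omega)]
  rw [rowCard _ (0) (0) (by have := hB4 m; omega) _ (fun j hj => by
    simp only [IsSkewCell, part4, TabF]
    first
      | (split_ifs <;> omega)
      | (norm_num; split_ifs <;> omega)
      | (norm_num; omega)
      | norm_num
      | omega)]
  rw [rowCard _ (0) (0) (by have := hB4 m; omega) _ (fun j hj => by
    simp only [IsSkewCell, part4, TabF]
    first
      | (split_ifs <;> omega)
      | (norm_num; split_ifs <;> omega)
      | (norm_num; omega)
      | norm_num
      | omega)]
  rw [rowCard _ (0) (0) (by have := hB4 m; omega) _ (fun j hj => by
    simp only [IsSkewCell, part4, TabF]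
    first
      | (split_ifs <;> omega)
      | (norm_num; split_ifs <;> omega)
      | (norm_num; omega)
      | norm_num
      | omega)]
  try omega

lemma pcF_0_3 :
    prefixCount (part4 (m+1) (m+1) (m-1) (m-1)) (part4 m t s 0) (TabF m t s u v w) 0 c 3
      = 0 := by
  rw [prefixCount, prod_filter_card]
  rw [show (4:ℕ) = 3+1 from rfl, Finset.sum_range_succ, Finset.sum_range_succ,
    Finset.sum_range_succ, Finset.sum_range_succ, Finset.sum_range_zero]
  rw [rowCard _ (0) (0) (by have := hB4 m; omega) _ (fun j hj => by
    simp only [IsSkewCell, part4, TabF]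
    first
      | (split_ifs <;> omega)
      | (norm_num; split_ifs <;> omega)
      | (norm_num; omega)
      | norm_num
      | omega)]
  rw [rowCard _ (0) (0) (by have := hB4 m; omega) _ (fun j hj => by
    simp only [IsSkewCell, part4, TabF]
    first
      | (split_ifs <;> omega)
      | (norm_num; split_ifs <;> omega)
      | (norm_num; omega)
      | norm_num
      | omega)]
  rw [rowCard _ (0) (0) (by have := hB4 m; omega) _ (fun j hj => by
    simp only [IsSkewCell, part4, TabF]
    first
      | (split_ifs <;> omega)
      | (norm_num; split_ifs <;> omega)
      | (norm_num; omega)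
      | norm_num
      | omega)]
  rw [rowCard _ (0) (0) (by have := hB4 m; omega) _ (fun j hj => by
    simp only [IsSkewCell, part4, TabF]
    first
      | (split_ifs <;> omega)
      | (norm_num; split_ifs <;> omega)
      | (norm_num; omega)
      | norm_num
      | omega)]
  try omega

lemma pcF_1_1 :
    prefixCount (part4 (m+1) (m+1) (m-1) (m-1)) (part4 m t s 0) (TabF m t s u v w) 1 c 1
      = 1 + (m - max t c) := by
  rw [prefixCount, prod_filter_card]
  rw [show (4:ℕ) = 3+1 from rfl, Finset.sum_range_succ, Finset.sum_range_succ,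
    Finset.sum_range_succ, Finset.sum_range_succ, Finset.sum_range_zero]
  rw [rowCard _ (m) (m+1) (by have := hB4 m; omega) _ (fun j hj => by
    simp only [IsSkewCell, part4, TabF]
    first
      | (split_ifs <;> omega)
      | (norm_num; split_ifs <;> omega)
      | (norm_num; omega)
      | norm_num
      | omega)]
  rw [rowCard _ (max t c) (m) (by have := hB4 m; omega) _ (fun j hj => by
    simp only [IsSkewCell, part4, TabF]
    first
      | (split_ifs <;> omega)
      | (norm_num; split_ifs <;> omega)
      | (norm_num; omega)
      | norm_num
      | omega)]
  rw [rowCard _ (0) (0) (by have := hB4 m; omega) _ (fun j hj => by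
    simp only [IsSkewCell, part4, TabF]
    first
      | (split_ifs <;> omega)
      | (norm_num; split_ifs <;> omega)
      | (norm_num; omega)
      | norm_num
      | omega)]
  rw [rowCard _ (0) (0) (by have := hB4 m; omega) _ (fun j hj => by
    simp only [IsSkewCell, part4, TabF]
    first
      | (split_ifs <;> omega)
      | (norm_num; split_ifs <;> omega)
      | (norm_num; omega)
      | norm_num
      | omega)]
  try omega

lemma pcF_1_2 :
    prefixCount (part4 (m+1) (m+1) (m-1) (m-1)) (part4 m t s 0) (TabF m t s u v w) 1 c 2
      = (m+1) - max m c := by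
  rw [prefixCount, prod_filter_card]
  rw [show (4:ℕ) = 3+1 from rfl, Finset.sum_range_succ, Finset.sum_range_succ,
    Finset.sum_range_succ, Finset.sum_range_succ, Finset.sum_range_zero]
  rw [rowCard _ (0) (0) (by have := hB4 m; omega) _ (fun j hj => by
    simp only [IsSkewCell, part4, TabF]
    first
      | (split_ifs <;> omega)
      | (norm_num; split_ifs <;> omega)
      | (norm_num; omega)
      | norm_num
      | omega)]
  rw [rowCard _ (max m c) (m+1) (by have := hB4 m; omega) _ (fun j hj => by
    simp only [IsSkewCell, part4, TabF]
    first
      | (split_ifs <;> omega)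
      | (norm_num; split_ifs <;> omega)
      | (norm_num; omega)
      | norm_num
      | omega)]
  rw [rowCard _ (0) (0) (by have := hB4 m; omega) _ (fun j hj => by
    simp only [IsSkewCell, part4, TabF]
    first
      | (split_ifs <;> omega)
      | (norm_num; split_ifs <;> omega)
      | (norm_num; omega)
      | norm_num
      | omega)]
  rw [rowCard _ (0) (0) (by have := hB4 m; omega) _ (fun j hj => by
    simp only [IsSkewCell, part4, TabF]
    first
      | (split_ifs <;> omega)
      | (norm_num; split_ifs <;> omega)
      | (norm_num; omega)
      | norm_num
      | omega)]
  try omega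

lemma pcF_1_3 :
    prefixCount (part4 (m+1) (m+1) (m-1) (m-1)) (part4 m t s 0) (TabF m t s u v w) 1 c 3
      = 0 := by
  rw [prefixCount, prod_filter_card]
  rw [show (4:ℕ) = 3+1 from rfl, Finset.sum_range_succ, Finset.sum_range_succ,
    Finset.sum_range_succ, Finset.sum_range_succ, Finset.sum_range_zero]
  rw [rowCard _ (0) (0) (by have := hB4 m; omega) _ (fun j hj => by
    simp only [IsSkewCell, part4, TabF]
    first
      | (split_ifs <;> omega)
      | (norm_num; split_ifs <;> omega)
      | (norm_num; omega)
      | norm_num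
      | omega)]
  rw [rowCard _ (0) (0) (by have := hB4 m; omega) _ (fun j hj => by
    simp only [IsSkewCell, part4, TabF]
    first
      | (split_ifs <;> omega)
      | (norm_num; split_ifs <;> omega)
      | (norm_num; omega)
      | norm_num
      | omega)]
  rw [rowCard _ (0) (0) (by have := hB4 m; omega) _ (fun j hj => by
    simp only [IsSkewCell, part4, TabF]
    first
      | (split_ifs <;> omega)
      | (norm_num; split_ifs <;> omega)
      | (norm_num; omega)
      | norm_num
      | omega)]
  rw [rowCard _ (0) (0) (by have := hB4 m; omega) _ (fun j hj => by
    simp only [IsSkewCell, part4, TabF]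
    first
      | (split_ifs <;> omega)
      | (norm_num; split_ifs <;> omega)
      | (norm_num; omega)
      | norm_num
      | omega)]
  try omega

lemma pcF_2_1 :
    prefixCount (part4 (m+1) (m+1) (m-1) (m-1)) (part4 m t s 0) (TabF m t s u v w) 2 c 1
      = 1 + (m - t) + (w - max s c) := by
  rw [prefixCount, prod_filter_card]
  rw [show (4:ℕ) = 3+1 from rfl, Finset.sum_range_succ, Finset.sum_range_succ,
    Finset.sum_range_succ, Finset.sum_range_succ, Finset.sum_range_zero]
  rw [rowCard _ (m) (m+1) (by have := hB4 m; omega) _ (fun j hj => by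
    simp only [IsSkewCell, part4, TabF]
    first
      | (split_ifs <;> omega)
      | (norm_num; split_ifs <;> omega)
      | (norm_num; omega)
      | norm_num
      | omega)]
  rw [rowCard _ (t) (m) (by have := hB4 m; omega) _ (fun j hj => by
    simp only [IsSkewCell, part4, TabF]
    first
      | (split_ifs <;> omega)
      | (norm_num; split_ifs <;> omega)
      | (norm_num; omega)
      | norm_num
      | omega)]
  rw [rowCard _ (max s c) (w) (by have := hB4 m; omega) _ (fun j hj => by
    simp only [IsSkewCell, part4, TabF]
    first
      | (split_ifs <;> omega)
      | (norm_num; split_ifs <;> omega)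
      | (norm_num; omega)
      | norm_num
      | omega)]
  rw [rowCard _ (0) (0) (by have := hB4 m; omega) _ (fun j hj => by
    simp only [IsSkewCell, part4, TabF]
    first
      | (split_ifs <;> omega)
      | (norm_num; split_ifs <;> omega)
      | (norm_num; omega)
      | norm_num
      | omega)]
  try omega

lemma pcF_2_2 :
    prefixCount (part4 (m+1) (m+1) (m-1) (m-1)) (part4 m t s 0) (TabF m t s u v w) 2 c 2
      = 1 + ((m-1) - max w c) := by
  rw [prefixCount, prod_filter_card]
  rw [show (4:ℕ) = 3+1 from rfl, Finset.sum_range_succ, Finset.sum_range_succ,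
    Finset.sum_range_succ, Finset.sum_range_succ, Finset.sum_range_zero]
  rw [rowCard _ (0) (0) (by have := hB4 m; omega) _ (fun j hj => by
    simp only [IsSkewCell, part4, TabF]
    first
      | (split_ifs <;> omega)
      | (norm_num; split_ifs <;> omega)
      | (norm_num; omega)
      | norm_num
      | omega)]
  rw [rowCard _ (m) (m+1) (by have := hB4 m; omega) _ (fun j hj => by
    simp only [IsSkewCell, part4, TabF]
    first
      | (split_ifs <;> omega)
      | (norm_num; split_ifs <;> omega)
      | (norm_num; omega)
      | norm_num
      | omega)]
  rw [rowCard _ (max w c) (m-1) (by have := hB4 m; omega) _ (fun j hj => by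
    simp only [IsSkewCell, part4, TabF]
    first
      | (split_ifs <;> omega)
      | (norm_num; split_ifs <;> omega)
      | (norm_num; omega)
      | norm_num
      | omega)]
  rw [rowCard _ (0) (0) (by have := hB4 m; omega) _ (fun j hj => by
    simp only [IsSkewCell, part4, TabF]
    first
      | (split_ifs <;> omega)
      | (norm_num; split_ifs <;> omega)
      | (norm_num; omega)
      | norm_num
      | omega)]
  try omega

lemma pcF_2_3 :
    prefixCount (part4 (m+1) (m+1) (m-1) (m-1)) (part4 m t s 0) (TabF m t s u v w) 2 c 3
      = 0 := by
  rw [prefixCount, prod_filter_card]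
  rw [show (4:ℕ) = 3+1 from rfl, Finset.sum_range_succ, Finset.sum_range_succ,
    Finset.sum_range_succ, Finset.sum_range_succ, Finset.sum_range_zero]
  rw [rowCard _ (0) (0) (by have := hB4 m; omega) _ (fun j hj => by
    simp only [IsSkewCell, part4, TabF]
    first
      | (split_ifs <;> omega)
      | (norm_num; split_ifs <;> omega)
      | (norm_num; omega)
      | norm_num
      | omega)]
  rw [rowCard _ (0) (0) (by have := hB4 m; omega) _ (fun j hj => by
    simp only [IsSkewCell, part4, TabF]
    first
      | (split_ifs <;> omega)
      | (norm_num; split_ifs <;> omega)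
      | (norm_num; omega)
      | norm_num
      | omega)]
  rw [rowCard _ (0) (0) (by have := hB4 m; omega) _ (fun j hj => by
    simp only [IsSkewCell, part4, TabF]
    first
      | (split_ifs <;> omega)
      | (norm_num; split_ifs <;> omega)
      | (norm_num; omega)
      | norm_num
      | omega)]
  rw [rowCard _ (0) (0) (by have := hB4 m; omega) _ (fun j hj => by
    simp only [IsSkewCell, part4, TabF]
    first
      | (split_ifs <;> omega)
      | (norm_num; split_ifs <;> omega)
      | (norm_num; omega)
      | norm_num
      | omega)]
  try omega

lemma pcF_3_1 :
    prefixCount (part4 (m+1) (m+1) (m-1) (m-1)) (part4 m t s 0) (TabF m t s u v w) 3 c 1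
      = 1 + (m - t) + (w - s) + (u - c) := by
  rw [prefixCount, prod_filter_card]
  rw [show (4:ℕ) = 3+1 from rfl, Finset.sum_range_succ, Finset.sum_range_succ,
    Finset.sum_range_succ, Finset.sum_range_succ, Finset.sum_range_zero]
  rw [rowCard _ (m) (m+1) (by have := hB4 m; omega) _ (fun j hj => by
    simp only [IsSkewCell, part4, TabF]
    first
      | (split_ifs <;> omega)
      | (norm_num; split_ifs <;> omega)
      | (norm_num; omega)
      | norm_num
      | omega)]
  rw [rowCard _ (t) (m) (by have := hB4 m; omega) _ (fun j hj => by
    simp only [IsSkewCell, part4, TabF]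
    first
      | (split_ifs <;> omega)
      | (norm_num; split_ifs <;> omega)
      | (norm_num; omega)
      | norm_num
      | omega)]
  rw [rowCard _ (s) (w) (by have := hB4 m; omega) _ (fun j hj => by
    simp only [IsSkewCell, part4, TabF]
    first
      | (split_ifs <;> omega)
      | (norm_num; split_ifs <;> omega)
      | (norm_num; omega)
      | norm_num
      | omega)]
  rw [rowCard _ (c) (u) (by have := hB4 m; omega) _ (fun j hj => by
    simp only [IsSkewCell, part4, TabF]
    first
      | (split_ifs <;> omega)
      | (norm_num; split_ifs <;> omega)
      | (norm_num; omega)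
      | norm_num
      | omega)]
  try omega

lemma pcF_3_2 :
    prefixCount (part4 (m+1) (m+1) (m-1) (m-1)) (part4 m t s 0) (TabF m t s u v w) 3 c 2
      = 1 + ((m-1) - w) + (v - max u c) := by
  rw [prefixCount, prod_filter_card]
  rw [show (4:ℕ) = 3+1 from rfl, Finset.sum_range_succ, Finset.sum_range_succ,
    Finset.sum_range_succ, Finset.sum_range_succ, Finset.sum_range_zero]
  rw [rowCard _ (0) (0) (by have := hB4 m; omega) _ (fun j hj => by
    simp only [IsSkewCell, part4, TabF]
    first
      | (split_ifs <;> omega)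
      | (norm_num; split_ifs <;> omega)
      | (norm_num; omega)
      | norm_num
      | omega)]
  rw [rowCard _ (m) (m+1) (by have := hB4 m; omega) _ (fun j hj => by
    simp only [IsSkewCell, part4, TabF]
    first
      | (split_ifs <;> omega)
      | (norm_num; split_ifs <;> omega)
      | (norm_num; omega)
      | norm_num
      | omega)]
  rw [rowCard _ (w) (m-1) (by have := hB4 m; omega) _ (fun j hj => by
    simp only [IsSkewCell, part4, TabF]
    first
      | (split_ifs <;> omega)
      | (norm_num; split_ifs <;> omega)
      | (norm_num; omega)
      | norm_num
      | omega)]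
  rw [rowCard _ (max u c) (v) (by have := hB4 m; omega) _ (fun j hj => by
    simp only [IsSkewCell, part4, TabF]
    first
      | (split_ifs <;> omega)
      | (norm_num; split_ifs <;> omega)
      | (norm_num; omega)
      | norm_num
      | omega)]
  try omega

lemma pcF_3_3 :
    prefixCount (part4 (m+1) (m+1) (m-1) (m-1)) (part4 m t s 0) (TabF m t s u v w) 3 c 3
      = (m-1) - max v c := by
  rw [prefixCount, prod_filter_card]
  rw [show (4:ℕ) = 3+1 from rfl, Finset.sum_range_succ, Finset.sum_range_succ,
    Finset.sum_range_succ, Finset.sum_range_succ, Finset.sum_range_zero]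
  rw [rowCard _ (0) (0) (by have := hB4 m; omega) _ (fun j hj => by
    simp only [IsSkewCell, part4, TabF]
    first
      | (split_ifs <;> omega)
      | (norm_num; split_ifs <;> omega)
      | (norm_num; omega)
      | norm_num
      | omega)]
  rw [rowCard _ (0) (0) (by have := hB4 m; omega) _ (fun j hj => by
    simp only [IsSkewCell, part4, TabF]
    first
      | (split_ifs <;> omega)
      | (norm_num; split_ifs <;> omega)
      | (norm_num; omega)
      | norm_num
      | omega)]
  rw [rowCard _ (0) (0) (by have := hB4 m; omega) _ (fun j hj => by
    simp only [IsSkewCell, part4, TabF]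
    first
      | (split_ifs <;> omega)
      | (norm_num; split_ifs <;> omega)
      | (norm_num; omega)
      | norm_num
      | omega)]
  rw [rowCard _ (max v c) (m-1) (by have := hB4 m; omega) _ (fun j hj => by
    simp only [IsSkewCell, part4, TabF]
    first
      | (split_ifs <;> omega)
      | (norm_num; split_ifs <;> omega)
      | (norm_num; omega)
      | norm_num
      | omega)]
  try omega

end PC

lemma content4_ge5 (a b c d e : ℕ) : content4 a b c d (e+5) = 0 := rfl

lemma tabF_isLR (m t s u v w : ℕ) (hm : 1 ≤ m) (hts : s ≤ t) (htm : t ≤ m)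
    (hsum : t + s ≤ m) (h1 : s ≤ w) (h2 : w ≤ t) (h3 : t ≤ w + 1)
    (e1 : u + w + 1 = s + t) (e2 : v + 1 = t) :
    IsLRTableau (part4 (m+1) (m+1) (m-1) (m-1)) (part4 m t s 0)
      (content4 m (m-s) (m-t) 0) (TabF m t s u v w) := by
  have hw : w + 1 ≤ m := by omega
  have hu : u ≤ v := by omega
  have hv : v + 1 ≤ m := by omega
  have hzero4 : ∀ e, 4 ≤ e →
      entryCount (part4 (m+1) (m+1) (m-1) (m-1)) (part4 m t s 0) (TabF m t s u v w) e = 0 :=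
    fun e he => entryCount_zero _ _ _ _
      (fun i j hval => by have := TabF_le3 m t s u v w i j; omega)
  constructor
  · intro i j h
    rcases i with _|_|_|_|i <;>
      first
        | rfl
        | (simp only [IsSkewCell, part4] at h; simp only [TabF]; split_ifs <;> omega)
  · intro i j h
    rcases i with _|_|_|_|i <;> simp only [IsSkewCell, part4] at h <;>
      first
        | omega
        | (simp only [TabF]; split_ifs <;> omega)
  · intro i j j' h h' hjj'
    rcases i with _|_|_|_|i <;> simp only [IsSkewCell, part4] at h h' <;>
      first
        | omega
        | (simp only [TabF]; split_ifs <;> omega)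
  · intro i i' j h h' hii'
    rcases i with _|_|_|_|i <;> rcases i' with _|_|_|_|i' <;>
      simp only [IsSkewCell, part4] at h h' <;>
      first
        | omega
        | (simp only [TabF]; split_ifs <;> omega)
  · intro e he
    rcases e with _|_|_|_|_|e
    · exact absurd he (by omega)
    · rw [ecF_1 m t s u v w hm htm h1 hw hu hv]; simp only [content4]; omega
    · rw [ecF_2 m t s u v w hm htm h1 hw hu hv]; simp only [content4]; omega
    · rw [ecF_3 m t s u v w hm htm h1 hw hu hv]; simp only [content4]; omega
    · rw [hzero4 4 (by omega)]; rfl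
    · rw [hzero4 (e+5) (by omega), content4_ge5]
  · intro r c e he
    rcases e with _|_|e
    · exact absurd he (by omega)
    · -- e = 1 : prefixCount 2 ≤ prefixCount 1
      rcases r with _|_|_|_|r
      · rw [pcF_0_2 m t s u v w c hm htm h1 hw hu hv,
          pcF_0_1 m t s u v w c hm htm h1 hw hu hv]
        omega
      · rw [pcF_1_2 m t s u v w c hm htm h1 hw hu hv,
          pcF_1_1 m t s u v w c hm htm h1 hw hu hv]; omega
      · rw [pcF_2_2 m t s u v w c hm htm h1 hw hu hv,
          pcF_2_1 m t s u v w c hm htm h1 hw hu hv]; omega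
      · rw [pcF_3_2 m t s u v w c hm htm h1 hw hu hv,
          pcF_3_1 m t s u v w c hm htm h1 hw hu hv]; omega
      · rw [pc_of_ge4 _ _ _ _ _ _ (by omega), pc_of_ge4 _ _ _ _ _ _ (by omega),
          ecF_2 m t s u v w hm htm h1 hw hu hv, ecF_1 m t s u v w hm htm h1 hw hu hv]
        omega
    · -- e = e' + 2
      rcases e with _|e
      · -- e = 2 : prefixCount 3 ≤ prefixCount 2
        rcases r with _|_|_|_|r
        · rw [pcF_0_3 m t s u v w c hm htm h1 hw hu hv,
            pcF_0_2 m t s u v w c hm htm h1 hw hu hv]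
        · rw [pcF_1_3 m t s u v w c hm htm h1 hw hu hv,
            pcF_1_2 m t s u v w c hm htm h1 hw hu hv]; omega
        · rw [pcF_2_3 m t s u v w c hm htm h1 hw hu hv,
            pcF_2_2 m t s u v w c hm htm h1 hw hu hv]; omega
        · rw [pcF_3_3 m t s u v w c hm htm h1 hw hu hv,
            pcF_3_2 m t s u v w c hm htm h1 hw hu hv]; omega
        · rw [pc_of_ge4 _ _ _ _ _ _ (by omega), pc_of_ge4 _ _ _ _ _ _ (by omega),
            ecF_3 m t s u v w hm htm h1 hw hu hv, ecF_2 m t s u v w hm htm h1 hw hu hv]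
          omega
      · -- e ≥ 3 : prefixCount (e+4) = 0
        calc prefixCount _ _ _ r c (e+3+1)
            ≤ entryCount (part4 (m+1) (m+1) (m-1) (m-1)) (part4 m t s 0)
                (TabF m t s u v w) (e+4) := pc_le_entry _ _ _ _ _ _
          _ = 0 := hzero4 _ (by omega)
          _ ≤ _ := Nat.zero_le _


section Helpers

variable (ν lam : ℕ → ℕ) (T : ℕ → ℕ → ℕ)

lemma entry_ge_one (i j : ℕ) (h4 : i < 4) (hcb : j < colBound ν)
    (hsk : IsSkewCell ν lam i j) : 1 ≤ entryCount ν lam T (T i j) :=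
  Finset.card_pos.mpr ⟨(i, j), Finset.mem_filter.mpr
    ⟨Finset.mem_product.mpr ⟨Finset.mem_range.mpr h4, Finset.mem_range.mpr hcb⟩, hsk, rfl⟩⟩

lemma pc_ge_one (r c i j : ℕ) (h4 : i < 4) (hcb : j < colBound ν)
    (hsk : IsSkewCell ν lam i j) (hpre : i < r ∨ (i = r ∧ c ≤ j)) :
    1 ≤ prefixCount ν lam T r c (T i j) :=
  Finset.card_pos.mpr ⟨(i, j), Finset.mem_filter.mpr
    ⟨Finset.mem_product.mpr ⟨Finset.mem_range.mpr h4, Finset.mem_range.mpr hcb⟩, hsk, rfl, hpre⟩⟩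

lemma pc_eq_zero (r c e : ℕ)
    (h : ∀ i j, i < 4 → IsSkewCell ν lam i j → (i < r ∨ (i = r ∧ c ≤ j)) → T i j ≠ e) :
    prefixCount ν lam T r c e = 0 := by
  rw [prefixCount, Finset.card_eq_zero, Finset.filter_eq_empty_iff]
  rintro ⟨i, j⟩ hij
  simp only [Finset.mem_product, Finset.mem_range] at hij
  rintro ⟨hsk, hval, hpre⟩
  exact h i j hij.1 hsk hpre hval

lemma pc_le_one (r c e i0 j0 : ℕ)
    (h : ∀ i j, i < 4 → IsSkewCell ν lam i j → (i < r ∨ (i = r ∧ c ≤ j)) → T i j = e →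
      i = i0 ∧ j = j0) :
    prefixCount ν lam T r c e ≤ 1 := by
  apply Finset.card_le_one.mpr
  rintro ⟨i, j⟩ ha ⟨i', j'⟩ hb
  simp only [prefixCount, Finset.mem_filter, Finset.mem_product, Finset.mem_range] at ha hb
  obtain ⟨⟨hi, hj⟩, hsk, hval, hpre⟩ := ha
  obtain ⟨⟨hi', hj'⟩, hsk', hval', hpre'⟩ := hb
  obtain ⟨e1, e2⟩ := h i j hi hsk hpre hval
  obtain ⟨e3, e4⟩ := h i' j' hi' hsk' hpre' hval'
  simp [e1, e2, e3, e4]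

lemma pc_ge_two (r c e i1 j1 i2 j2 : ℕ) (h4 : i1 < 4) (hcb : j1 < colBound ν)
    (hsk : IsSkewCell ν lam i1 j1) (hval : T i1 j1 = e) (hpre : i1 < r ∨ (i1 = r ∧ c ≤ j1))
    (h4' : i2 < 4) (hcb' : j2 < colBound ν) (hsk' : IsSkewCell ν lam i2 j2)
    (hval' : T i2 j2 = e) (hpre' : i2 < r ∨ (i2 = r ∧ c ≤ j2))
    (hne : ¬(i1 = i2 ∧ j1 = j2)) :
    2 ≤ prefixCount ν lam T r c e := by
  apply Finset.one_lt_card.mpr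
  refine ⟨(i1, j1), ?_, (i2, j2), ?_, ?_⟩
  · exact Finset.mem_filter.mpr
      ⟨Finset.mem_product.mpr ⟨Finset.mem_range.mpr h4, Finset.mem_range.mpr hcb⟩, hsk, hval, hpre⟩
  · exact Finset.mem_filter.mpr
      ⟨Finset.mem_product.mpr ⟨Finset.mem_range.mpr h4', Finset.mem_range.mpr hcb'⟩, hsk', hval', hpre'⟩
  · simp only [ne_eq, Prod.mk.injEq]
    exact hne

end Helpers

lemma content4_ge4 (a b c : ℕ) (e : ℕ) (he : 4 ≤ e) : content4 a b c 0 e = 0 := by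
  rcases e with _|_|_|_|_|e
  · exact absurd he (by omega)
  · exact absurd he (by omega)
  · exact absurd he (by omega)
  · exact absurd he (by omega)
  · rfl
  · rfl


lemma isLR_char (m t s : ℕ) (hm : 1 ≤ m) (hts : s ≤ t) (htm : t ≤ m) (hsum : t + s ≤ m)
    (T : ℕ → ℕ → ℕ)
    (hT : IsLRTableau (part4 (m+1) (m+1) (m-1) (m-1)) (part4 m t s 0)
      (content4 m (m-s) (m-t) 0) T) :
    ∃ u v w, s ≤ w ∧ w ≤ t ∧ t ≤ w + 1 ∧ u + w + 1 = s + t ∧ v + 1 = t ∧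
      T = TabF m t s u v w := by
  have hB := hB4 m
  set ν := part4 (m+1) (m+1) (m-1) (m-1) with hν
  set lam := part4 m t s 0 with hlam
  -- basic facts about skew cells
  have hcell : ∀ i j, IsSkewCell ν lam i j → i < 4 ∧ j < colBound ν := by
    intro i j h
    rcases i with _|_|_|_|i <;> simp only [hν, hlam, IsSkewCell, part4] at h <;>
      constructor <;> omega
  -- entries are at most 3
  have hle3 : ∀ i j, IsSkewCell ν lam i j → T i j ≤ 3 := by
    intro i j h
    by_contra hgt
    have h1 := entry_ge_one ν lam T i j (hcell i j h).1 (hcell i j h).2 h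
    rw [hT.content (T i j) (by omega), content4_ge4 _ _ _ _ (by omega)] at h1
    omega
  -- individual skew cells
  have sk0m : IsSkewCell ν lam 0 m := by simp [hν, hlam, IsSkewCell, part4]
  have sk1 : ∀ j, t ≤ j → j ≤ m → IsSkewCell ν lam 1 j := by
    intro j h1 h2; simp [hν, hlam, IsSkewCell, part4]; omega
  have sk2 : ∀ j, s ≤ j → j + 1 < m → IsSkewCell ν lam 2 j := by
    intro j h1 h2; simp [hν, hlam, IsSkewCell, part4]; omega
  have sk3 : ∀ j, j + 1 < m → IsSkewCell ν lam 3 j := by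
    intro j h2; simp [hν, hlam, IsSkewCell, part4]; omega
  -- T 0 m = 1
  have hv0m : T 0 m = 1 := by
    have hpos := hT.pos 0 m sk0m
    by_contra hne
    have hge2 : 2 ≤ T 0 m := by omega
    have hz : prefixCount ν lam T 0 m (T 0 m - 1) = 0 := by
      apply pc_eq_zero
      intro i j h4 hsk hpre hval
      rcases hpre with h | ⟨rfl, hc⟩
      · omega
      · simp only [hν, hlam, IsSkewCell, part4] at hsk
        have : j = m := by omega
        subst this
        omega
    have hone := pc_ge_one ν lam T 0 m 0 m (by norm_num) (by omega) sk0m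
      (Or.inr ⟨rfl, le_refl m⟩)
    have hlat := hT.lattice 0 m (T 0 m - 1) (by omega)
    rw [show T 0 m - 1 + 1 = T 0 m by omega] at hlat
    omega
  -- T 1 m = 2
  have sk1m : IsSkewCell ν lam 1 m := sk1 m htm (le_refl m)
  have h1mge : 2 ≤ T 1 m := by
    have := hT.col_strict 0 1 m sk0m sk1m (by norm_num)
    omega
  have hv1m : T 1 m = 2 := by
    by_contra hne
    have h3 : T 1 m = 3 := by have := hle3 1 m sk1m; omega
    have hz : prefixCount ν lam T 1 m 2 = 0 := by
      apply pc_eq_zero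
      intro i j h4 hsk hpre hval
      rcases hpre with h | ⟨rfl, hc⟩
      · have : i = 0 := by omega
        subst this
        simp only [hν, hlam, IsSkewCell, part4] at hsk
        have : j = m := by omega
        subst this
        omega
      · simp only [hν, hlam, IsSkewCell, part4] at hsk
        have : j = m := by omega
        subst this
        omega
    have hone := pc_ge_one ν lam T 1 m 1 m (by norm_num) (by omega) sk1m
      (Or.inr ⟨rfl, le_refl m⟩)
    rw [h3] at hone
    have hlat := hT.lattice 1 m 2 (by omega)
    rw [show (2:ℕ)+1 = 3 from rfl] at hlat
    omega
  -- row 1 entries equal to 1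
  have hrow1 : ∀ j, t ≤ j → j < m → T 1 j = 1 := by
    intro j hj1 hj2
    have skj : IsSkewCell ν lam 1 j := sk1 j hj1 (by omega)
    have skm1 : IsSkewCell ν lam 1 (m-1) := sk1 (m-1) (by omega) (by omega)
    have hle : T 1 j ≤ T 1 (m-1) := hT.row_weak 1 j (m-1) skj skm1 (by omega)
    have hpos := hT.pos 1 j skj
    have hm1le : T 1 (m-1) ≤ 2 := by
      have := hT.row_weak 1 (m-1) m skm1 sk1m (by omega)
      omega
    have hm1 : T 1 (m-1) = 1 := by
      by_contra hne2
      have h2 : T 1 (m-1) = 2 := by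
        have := hT.pos 1 (m-1) skm1
        omega
      have htwo := pc_ge_two ν lam T 1 (m-1) 2 1 m 1 (m-1) (by norm_num) (by omega)
        sk1m hv1m (Or.inr ⟨rfl, by omega⟩) (by norm_num) (by omega) skm1 h2
        (Or.inr ⟨rfl, le_refl _⟩) (by omega)
      have hone : prefixCount ν lam T 1 (m-1) 1 ≤ 1 := by
        apply pc_le_one ν lam T 1 (m-1) 1 0 m
        intro i j h4 hsk hpre hval
        rcases hpre with h | ⟨rfl, hc⟩
        · have : i = 0 := by omega
          subst this
          simp only [hν, hlam, IsSkewCell, part4] at hsk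
          omega
        · simp only [hν, hlam, IsSkewCell, part4] at hsk
          have : j = m - 1 ∨ j = m := by omega
          rcases this with rfl | rfl
          · omega
          · omega
      have hlat := hT.lattice 1 (m-1) 1 (by omega)
      rw [show (1:ℕ)+1 = 2 from rfl] at hlat
      omega
    omega
  -- row 2 entries at most 2
  have hrow2le : ∀ j, s ≤ j → j + 1 < m → T 2 j ≤ 2 := by
    intro j h1 h2
    have := hT.col_strict 2 3 j (sk2 j h1 h2) (sk3 j h2) (by norm_num)
    have := hle3 3 j (sk3 j h2)
    omega
  -- threshold for row 2
  obtain ⟨w, hws, hwm, hrow2⟩ : ∃ w, s ≤ w ∧ w + 1 ≤ m ∧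
      ∀ j, s ≤ j → j + 1 < m → T 2 j = if j < w then 1 else 2 := by
    by_cases hex : ∃ j, j + 1 < m ∧ s ≤ j ∧ T 2 j = 2
    · refine ⟨Nat.find hex, ?_, ?_, ?_⟩
      · exact (Nat.find_spec hex).2.1
      · have := (Nat.find_spec hex).1; omega
      · intro j h1 h2
        by_cases hj : j < Nat.find hex
        · rw [if_pos hj]
          have hne := Nat.find_min hex hj
          have hpos := hT.pos 2 j (sk2 j h1 h2)
          have hle := hrow2le j h1 h2
          simp only [not_and] at hne
          have : T 2 j ≠ 2 := hne h2 h1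
          omega
        · rw [if_neg hj]
          have hspec := Nat.find_spec hex
          have hle := hT.row_weak 2 (Nat.find hex) j (sk2 _ hspec.2.1 hspec.1)
            (sk2 j h1 h2) (by omega)
          have := hrow2le j h1 h2
          omega
    · refine ⟨m - 1, by omega, by omega, ?_⟩
      intro j h1 h2
      rw [if_pos (by omega)]
      push_neg at hex
      have := hex j h2 h1
      have := hT.pos 2 j (sk2 j h1 h2)
      have := hrow2le j h1 h2
      omega
  -- threshold for row 3 : value 3
  obtain ⟨v, hvm, hrow3v⟩ : ∃ v, v + 1 ≤ m ∧
      ∀ j, j + 1 < m → (T 3 j = 3 ↔ v ≤ j) := by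
    by_cases hex : ∃ j, j + 1 < m ∧ T 3 j = 3
    · refine ⟨Nat.find hex, by have := (Nat.find_spec hex).1; omega, ?_⟩
      intro j h2
      constructor
      · intro h3
        by_contra hlt
        exact absurd ⟨h2, h3⟩ (Nat.find_min hex (by omega))
      · intro hge
        have hspec := Nat.find_spec hex
        have hle := hT.row_weak 3 (Nat.find hex) j (sk3 _ hspec.1) (sk3 j h2) hge
        have := hle3 3 j (sk3 j h2)
        omega
    · refine ⟨m - 1, by omega, ?_⟩
      intro j h2
      push_neg at hex
      have := hex j h2
      constructor
      · intro h3; exact absurd h3 this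
      · intro hge; omega
  -- threshold for row 3 : value ≥ 2
  obtain ⟨u, hum, hrow3u⟩ : ∃ u, u + 1 ≤ m ∧
      ∀ j, j + 1 < m → (2 ≤ T 3 j ↔ u ≤ j) := by
    by_cases hex : ∃ j, j + 1 < m ∧ 2 ≤ T 3 j
    · refine ⟨Nat.find hex, by have := (Nat.find_spec hex).1; omega, ?_⟩
      intro j h2
      constructor
      · intro h3
        by_contra hlt
        exact absurd ⟨h2, h3⟩ (Nat.find_min hex (by omega))
      · intro hge
        have hspec := Nat.find_spec hex
        have hle := hT.row_weak 3 (Nat.find hex) j (sk3 _ hspec.1) (sk3 j h2) hge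
        omega
    · refine ⟨m - 1, by omega, ?_⟩
      intro j h2
      push_neg at hex
      have := hex j h2
      constructor
      · intro h3; omega
      · intro hge; omega
  -- u ≤ v
  have huv : u ≤ v := by
    by_cases hvm' : v + 1 < m
    · have h3 : T 3 v = 3 := (hrow3v v hvm').2 (le_refl v)
      exact (hrow3u v hvm').1 (by omega)
    · omega
  -- row 3 values
  have hrow3 : ∀ j, j + 1 < m →
      T 3 j = if j < u then 1 else if j < v then 2 else 3 := by
    intro j h2
    have hpos := hT.pos 3 j (sk3 j h2)
    have hle := hle3 3 j (sk3 j h2)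
    have h1 := hrow3u j h2
    have h2' := hrow3v j h2
    split_ifs with ha hb
    · omega
    · omega
    · omega
  -- T equals the model tableau
  have hTF : T = TabF m t s u v w := by
    funext i j
    rcases i with _|_|_|_|i
    · simp only [TabF]
      split_ifs with h
      · subst h; exact hv0m
      · apply hT.zero_off; simp only [hν, hlam, IsSkewCell, part4]; omega
    · simp only [TabF]
      split_ifs with h h'
      · subst h; exact hv1m
      · exact hrow1 j h'.1 h'.2
      · apply hT.zero_off; simp only [hν, hlam, IsSkewCell, part4]; omega
    · by_cases hd : s ≤ j ∧ j + 1 < m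
      · rw [hrow2 j hd.1 hd.2]
        simp only [TabF]
        rw [if_pos hd]
      · simp only [TabF]
        rw [if_neg hd]
        apply hT.zero_off; simp only [hν, hlam, IsSkewCell, part4]; omega
    · by_cases hd : j + 1 < m
      · rw [hrow3 j hd]
        simp only [TabF]
        rw [if_pos hd]
      · simp only [TabF]
        rw [if_neg hd]
        apply hT.zero_off; simp only [hν, hlam, IsSkewCell, part4]; omega
    · show T (i+4) j = 0
      apply hT.zero_off; simp only [hν, hlam, IsSkewCell, part4]; omega
  -- pin down the parameters
  have hc1 := hT.content 1 (by omega)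
  have hc3 := hT.content 3 (by omega)
  rw [hTF] at hc1 hc3
  rw [hν, hlam] at hc1 hc3
  rw [ecF_1 m t s u v w hm htm hws hwm huv hvm] at hc1
  rw [ecF_3 m t s u v w hm htm hws hwm huv hvm] at hc3
  simp only [content4] at hc1 hc3
  have hlat1 := hT.lattice 2 w 1 (by omega)
  have hlat2 := hT.lattice 3 v 2 (by omega)
  rw [show (1:ℕ)+1 = 2 from rfl] at hlat1
  rw [show (2:ℕ)+1 = 3 from rfl] at hlat2
  rw [hTF, hν, hlam] at hlat1 hlat2
  rw [pcF_2_2 m t s u v w w hm htm hws hwm huv hvm,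
    pcF_2_1 m t s u v w w hm htm hws hwm huv hvm] at hlat1
  rw [pcF_3_3 m t s u v w v hm htm hws hwm huv hvm,
    pcF_3_2 m t s u v w v hm htm hws hwm huv hvm] at hlat2
  exact ⟨u, v, w, hws, by omega, by omega, by omega, by omega, hTF⟩


/-- For `m ≥ 1`, `m ≥ t ≥ s ≥ 0` with `m ≥ t + s`, `λ = (m, t, s, 0)` and
`μ = (m, m−s, m−t, 0)`, the Littlewood–Richardson coefficient
`c^{(m+1,m+1,m−1,m−1)}_{λ, μ}` equals `0` if `t = s = 0`, equals `2` if
`t > s > 0`, and equals `1` otherwise. -/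
theorem lrCoeff_nu_shifted_cases (m t s : ℕ) (hm : 1 ≤ m) (hts : s ≤ t) (htm : t ≤ m)
    (hsum : t + s ≤ m) :
    lrCoeff (part4 (m + 1) (m + 1) (m - 1) (m - 1)) (part4 m t s 0)
        (content4 m (m - s) (m - t) 0) =
      if t = 0 ∧ s = 0 then 0 else if 0 < s ∧ s < t then 2 else 1 := by
  by_cases ht0 : t = 0
  · -- no tableaux
    have hs0 : s = 0 := by omega
    rw [if_pos ⟨ht0, hs0⟩, lrCoeff]
    have : IsEmpty {T : ℕ → ℕ → ℕ // IsLRTableau (part4 (m + 1) (m + 1) (m - 1) (m - 1))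
        (part4 m t s 0) (content4 m (m - s) (m - t) 0) T} := by
      refine ⟨fun ⟨T, hT⟩ => ?_⟩
      obtain ⟨u, v, w, h1, h2, h3, h4, h5, _⟩ := isLR_char m t s hm hts htm hsum T hT
      omega
    exact Nat.card_of_isEmpty
  · rw [if_neg (by omega)]
    by_cases hs0 : s = 0
    · -- exactly one tableau, w = t - 1
      rw [if_neg (by omega)]
      have hiff : ∀ T, IsLRTableau (part4 (m + 1) (m + 1) (m - 1) (m - 1))
          (part4 m t s 0) (content4 m (m - s) (m - t) 0) T ↔
          T ∈ ({TabF m t s s (t-1) (t-1)} : Set (ℕ → ℕ → ℕ)) := by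
        intro T
        simp only [Set.mem_singleton_iff]
        constructor
        · intro hT
          obtain ⟨u, v, w, h1, h2, h3, h4, h5, hTF⟩ := isLR_char m t s hm hts htm hsum T hT
          rw [hTF, show u = s by omega, show v = t-1 by omega, show w = t-1 by omega]
        · rintro rfl
          exact tabF_isLR m t s s (t-1) (t-1) hm hts htm hsum (by omega) (by omega)
            (by omega) (by omega) (by omega)
      rw [lrCoeff, Nat.card_congr (Equiv.subtypeEquivRight hiff),
        Nat.card_coe_set_eq, Set.ncard_singleton]
    · by_cases hst : s = t
      · -- exactly one tableau, w = t
        rw [if_neg (by omega)]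
        have hiff : ∀ T, IsLRTableau (part4 (m + 1) (m + 1) (m - 1) (m - 1))
            (part4 m t s 0) (content4 m (m - s) (m - t) 0) T ↔
            T ∈ ({TabF m t s (s-1) (t-1) t} : Set (ℕ → ℕ → ℕ)) := by
          intro T
          simp only [Set.mem_singleton_iff]
          constructor
          · intro hT
            obtain ⟨u, v, w, h1, h2, h3, h4, h5, hTF⟩ := isLR_char m t s hm hts htm hsum T hT
            rw [hTF, show u = s-1 by omega, show v = t-1 by omega, show w = t by omega]
          · rintro rfl
            exact tabF_isLR m t s (s-1) (t-1) t hm hts htm hsum (by omega) (by omega)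
              (by omega) (by omega) (by omega)
        rw [lrCoeff, Nat.card_congr (Equiv.subtypeEquivRight hiff),
          Nat.card_coe_set_eq, Set.ncard_singleton]
      · -- two tableaux
        rw [if_pos (by omega)]
        have htm' : t < m := by omega
        have hne : TabF m t s s (t-1) (t-1) ≠ TabF m t s (s-1) (t-1) t := by
          intro h
          have h2 := congrFun (congrFun h 2) (t-1)
          simp only [TabF] at h2
          split_ifs at h2 <;> omega
        have hiff : ∀ T, IsLRTableau (part4 (m + 1) (m + 1) (m - 1) (m - 1))
            (part4 m t s 0) (content4 m (m - s) (m - t) 0) T ↔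
            T ∈ ({TabF m t s s (t-1) (t-1), TabF m t s (s-1) (t-1) t} : Set (ℕ → ℕ → ℕ)) := by
          intro T
          simp only [Set.mem_insert_iff, Set.mem_singleton_iff]
          constructor
          · intro hT
            obtain ⟨u, v, w, h1, h2, h3, h4, h5, hTF⟩ := isLR_char m t s hm hts htm hsum T hT
            have hw : w = t - 1 ∨ w = t := by omega
            rcases hw with hw | hw
            · left
              rw [hTF, show u = s by omega, show v = t-1 by omega, hw]
            · right
              rw [hTF, show u = s-1 by omega, show v = t-1 by omega, hw]
          · rintro (rfl | rfl)
            · exact tabF_isLR m t s s (t-1) (t-1) hm hts htm hsum (by omega) (by omega)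
                (by omega) (by omega) (by omega)
            · exact tabF_isLR m t s (s-1) (t-1) t hm hts htm hsum (by omega) (by omega)
                (by omega) (by omega) (by omega)
        rw [lrCoeff, Nat.card_congr (Equiv.subtypeEquivRight hiff),
          Nat.card_coe_set_eq, Set.ncard_pair hne]
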